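/- Fix an odd integer b = 2k+1 with k ≥ 1, ρ ∈ [0,1), and γ ∈ (0,1]. Define T(u) = ρ·γ·u + (1-ρ)·f_b(γ·u) for u ∈ [0,1], and α = γ·(ρ + (1-ρ)·f_b'(0)) where f_b'(0) = b·C(b-1,(b-1)/2)/2^{b-1}. If α ≤ 1, then for every μ₀ ∈ [0,1], the iterated sequence defined by μ_{t+1} = T(μ_t) converges to 0 as t → ∞. -/

import Mathlib

open Finset Filter

/-- The upper binomial tail `F(p) = ∑_{j=k+1}^{2k+1} C(2k+1,j) p^j (1-p)^{2k+1-j}`. -/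
noncomputable def majF (k : ℕ) (p : ℝ) : ℝ :=
  ∑ j ∈ Finset.Icc (k + 1) (2 * k + 1),
    (Nat.choose (2 * k + 1) j : ℝ) * p ^ j * (1 - p) ^ (2 * k + 1 - j)

/-- The majority map `f_b(u) = 2 F((1+u)/2) - 1` for odd fan-in `b = 2k+1`. -/
noncomputable def majMap (k : ℕ) (u : ℝ) : ℝ :=
  2 * majF k ((1 + u) / 2) - 1

/-- The one-layer recursion map `T(u) = ρ γ u + (1-ρ) f_b(γ u)` for fan-in `b = 2k+1`. -/
noncomputable def Tmap (k : ℕ) (ρ γ u : ℝ) : ℝ :=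
  ρ * γ * u + (1 - ρ) * majMap k (γ * u)

/-- The derivative of the majority map at the origin:
`f_b'(0) = b C(b-1,(b-1)/2)/2^{b-1} = (2k+1) C(2k,k)/2^{2k}`. -/
noncomputable def majPrimeZero (k : ℕ) : ℝ :=
  (2 * k + 1 : ℝ) * (Nat.choose (2 * k) k : ℝ) / 2 ^ (2 * k)

/-- The effective per-layer gain `α = γ (ρ + (1-ρ) f_b'(0))`. -/
noncomputable def alphaGain (k : ℕ) (ρ γ : ℝ) : ℝ :=
  γ * (ρ + (1 - ρ) * majPrimeZero k)

/-! Writing the binomial tail as a sum of Bernstein basis polynomials, their derivatives telescope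
and give `f_b'(u) = f_b'(0) (1 - u²)^k`. For `k ≥ 1` this is `< f_b'(0)` on `(0, 1]`, so
`f_b(v) < f_b'(0) v` there and hence `0 ≤ T(u) < α u ≤ u` for `u ∈ (0, 1]`. The orbit is then
decreasing and bounded below by `0`; its limit is a fixed point of the continuous map `T` in
`[0, 1]`, and the only such fixed point is `0`. -/

open Polynomial

theorem derivative_sum_bernsteinPolynomial_Icc (R : Type*) [CommRing R] {m n : ℕ} (hmn : m ≤ n) :
    derivative (∑ j ∈ Finset.Icc (m + 1) (n + 1), bernsteinPolynomial R (n + 1) j) =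
      (n + 1) * bernsteinPolynomial R n m := by
  rw [derivative_sum, ← map_add_right_Icc, Finset.sum_map]
  simp only [addRightEmbedding_apply, bernsteinPolynomial.derivative_succ_aux, ← Finset.mul_sum]
  have telescope := Finset.sum_Icc_sub hmn (bernsteinPolynomial R n)
  rw [Finset.sum_sub_distrib] at telescope ⊢
  rw [bernsteinPolynomial.eq_zero_of_lt R (Nat.lt_succ_self n)] at telescope
  linear_combination (-(n + 1 : R[X])) * telescope

theorem sum_Icc_choose_upper_half (k : ℕ) :
    ∑ j ∈ Finset.Icc (k + 1) (2 * k + 1), (2 * k + 1).choose j = 4 ^ k := by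
  have halves := Finset.sum_range_add_sum_Ico (fun j => (2 * k + 1).choose j)
    (show k + 1 ≤ 2 * k + 1 + 1 by omega)
  rw [Nat.sum_range_choose, Nat.sum_range_choose_halfway, Finset.Ico_add_one_right_eq_Icc,
    pow_succ, pow_mul] at halves
  norm_num at halves
  omega

theorem majF_eq_eval (k : ℕ) :
    majF k = fun p => (∑ j ∈ Finset.Icc (k + 1) (2 * k + 1),
      bernsteinPolynomial ℝ (2 * k + 1) j).eval p := by
  ext p
  simp [majF, bernsteinPolynomial, eval_finsetSum]

theorem majF_hasDerivAt (k : ℕ) (p : ℝ) :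
    HasDerivAt (majF k) ((2 * k + 1) * (2 * k).choose k * (p ^ k * (1 - p) ^ k)) p := by
  rw [majF_eq_eval]
  refine (Polynomial.hasDerivAt _ p).congr_deriv ?_
  rw [derivative_sum_bernsteinPolynomial_Icc ℝ (by omega : k ≤ 2 * k)]
  simp [bernsteinPolynomial, two_mul]
  ring

theorem majF_half (k : ℕ) : majF k (1 / 2) = 1 / 2 := by
  have term (j : ℕ) (hj : j ∈ Finset.Icc (k + 1) (2 * k + 1)) :
      ((2 * k + 1).choose j : ℝ) * (1 / 2) ^ j * (1 - 1 / 2) ^ (2 * k + 1 - j) =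
        ((2 * k + 1).choose j : ℝ) * (1 / 2) ^ (2 * k + 1) := by
    rw [Finset.mem_Icc] at hj
    rw [show (1 : ℝ) - 1 / 2 = 1 / 2 by norm_num, mul_assoc, ← pow_add, Nat.add_sub_cancel' hj.2]
  rw [majF, Finset.sum_congr rfl term, ← Finset.sum_mul]
  rw_mod_cast [sum_Icc_choose_upper_half]
  push_cast
  rw [pow_succ, pow_mul, ← mul_assoc, ← mul_pow]
  norm_num

theorem majMap_zero (k : ℕ) : majMap k 0 = 0 := by
  norm_num [majMap, majF_half]

theorem majMap_hasDerivAt (k : ℕ) (u : ℝ) :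
    HasDerivAt (majMap k) (majPrimeZero k * (1 - u ^ 2) ^ k) u := by
  have inner : HasDerivAt (fun u : ℝ => (1 + u) / 2) (1 / 2) u := by
    simpa using ((hasDerivAt_id u).const_add 1).div_const 2
  refine ((((majF_hasDerivAt k _).comp u inner).const_mul 2).sub_const 1).congr_deriv ?_
  rw [majPrimeZero, ← mul_pow, show (1 + u) / 2 * (1 - (1 + u) / 2) = (1 - u ^ 2) / 2 ^ 2 by ring,
    div_pow, ← pow_mul]
  field_simp

theorem majMap_continuous (k : ℕ) : Continuous (majMap k) :=
  continuous_iff_continuousAt.2 fun u => (majMap_hasDerivAt k u).continuousAt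

theorem majPrimeZero_pos (k : ℕ) : 0 < majPrimeZero k := by
  have := Nat.choose_pos (Nat.le_mul_of_pos_left k two_pos)
  unfold majPrimeZero
  positivity

theorem majMap_nonneg (k : ℕ) {v : ℝ} (hv : v ∈ Set.Icc 0 1) : 0 ≤ majMap k v := by
  have mono : MonotoneOn (majMap k) (Set.Icc 0 1) := by
    refine monotoneOn_of_hasDerivWithinAt_nonneg (convex_Icc 0 1)
      (majMap_continuous k).continuousOn (fun u _ => (majMap_hasDerivAt k u).hasDerivWithinAt)
      fun u hu => ?_
    rw [interior_Icc] at hu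
    have : 0 ≤ 1 - u ^ 2 := by nlinarith [hu.1, hu.2]
    have := majPrimeZero_pos k
    positivity
  simpa [majMap_zero] using mono (Set.left_mem_Icc.2 zero_le_one) hv hv.1

theorem majMap_lt_majPrimeZero_mul {k : ℕ} (hk : 1 ≤ k) {v : ℝ} (hv : v ∈ Set.Ioc 0 1) :
    majMap k v < majPrimeZero k * v := by
  have anti : StrictAntiOn (fun u => majMap k u - majPrimeZero k * u) (Set.Icc 0 1) := by
    refine strictAntiOn_of_hasDerivWithinAt_neg (convex_Icc 0 1)
      ((majMap_continuous k).sub (by fun_prop)).continuousOn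
      (fun u _ => ((majMap_hasDerivAt k u).sub ((hasDerivAt_id u).const_mul _)).hasDerivWithinAt)
      fun u hu => ?_
    rw [interior_Icc] at hu
    have : (1 - u ^ 2) ^ k < 1 :=
      pow_lt_one₀ (by nlinarith [hu.1, hu.2]) (by nlinarith [hu.1]) (by omega)
    have := majPrimeZero_pos k
    simp only [mul_one]
    nlinarith
  simpa [majMap_zero] using anti (Set.left_mem_Icc.2 zero_le_one) (Set.Ioc_subset_Icc_self hv) hv.1

theorem Tmap_zero (k : ℕ) (ρ γ : ℝ) : Tmap k ρ γ 0 = 0 := by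
  simp [Tmap, majMap_zero]

theorem Tmap_continuous (k : ℕ) (ρ γ : ℝ) : Continuous (Tmap k ρ γ) := by
  have := majMap_continuous k
  unfold Tmap
  fun_prop

theorem Tmap_nonneg {k : ℕ} {ρ γ u : ℝ} (hρ : ρ ∈ Set.Icc 0 1) (hγ : γ ∈ Set.Icc 0 1)
    (hu : u ∈ Set.Icc 0 1) : 0 ≤ Tmap k ρ γ u := by
  have hγu : γ * u ∈ Set.Icc 0 1 := ⟨mul_nonneg hγ.1 hu.1, mul_le_one₀ hγ.2 hu.1 hu.2⟩
  rw [Tmap]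
  exact add_nonneg (mul_nonneg (mul_nonneg hρ.1 hγ.1) hu.1)
    (mul_nonneg (sub_nonneg.2 hρ.2) (majMap_nonneg k hγu))

theorem Tmap_lt_alphaGain_mul {k : ℕ} (hk : 1 ≤ k) {ρ γ u : ℝ} (hρ : ρ < 1)
    (hγ : γ ∈ Set.Ioc 0 1) (hu : u ∈ Set.Ioc 0 1) : Tmap k ρ γ u < alphaGain k ρ γ * u := by
  have hγu : γ * u ∈ Set.Ioc 0 1 := ⟨mul_pos hγ.1 hu.1, mul_le_one₀ hγ.2 hu.1.le hu.2⟩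
  have := mul_lt_mul_of_pos_left (majMap_lt_majPrimeZero_mul hk hγu) (sub_pos.2 hρ)
  rw [Tmap, alphaGain]
  linarith

theorem tendsto_zero_of_recurrence_lt_self {f : ℝ → ℝ} {a : ℝ} (hf : Continuous f)
    (hf0 : f 0 = 0) (hnonneg : ∀ u ∈ Set.Icc 0 a, 0 ≤ f u) (hlt : ∀ u ∈ Set.Ioc 0 a, f u < u)
    {x : ℕ → ℝ} (hx0 : x 0 ∈ Set.Icc 0 a) (hx : ∀ t, x (t + 1) = f (x t)) :
    Tendsto x atTop (nhds 0) := by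
  have hle (u : ℝ) (hu : u ∈ Set.Icc 0 a) : f u ≤ u := by
    rcases hu.1.eq_or_lt with rfl | hpos
    · rw [hf0]
    · exact (hlt u ⟨hpos, hu.2⟩).le
  have hmem (t : ℕ) : x t ∈ Set.Icc 0 a := by
    induction t with
    | zero => exact hx0
    | succ t ih => exact hx t ▸ ⟨hnonneg _ ih, (hle _ ih).trans ih.2⟩
  have hanti : Antitone x := antitone_nat_of_succ_le fun t => hx t ▸ hle _ (hmem t)
  have hlim := tendsto_atTop_ciInf hanti ⟨0, Set.forall_mem_range.2 fun t => (hmem t).1⟩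
  set L := ⨅ t, x t
  have hL : L ∈ Set.Icc 0 a := isClosed_Icc.mem_of_tendsto hlim (Eventually.of_forall hmem)
  have hfix : f L = L := by
    refine tendsto_nhds_unique ((hf.tendsto L).comp hlim) ?_
    simpa only [Function.comp_def, ← hx] using (tendsto_add_atTop_iff_nat 1).2 hlim
  rcases hL.1.eq_or_lt with hL0 | hpos
  · rwa [hL0]
  · exact absurd hfix (hlt L ⟨hpos, hL.2⟩).ne

/-- Subcritical collapse: if `α ≤ 1`, the iterates of `T` from any `μ₀ ∈ [0,1]`
converge to `0`. -/
theorem subcritical_collapse (k : ℕ) (hk : 1 ≤ k) (ρ γ : ℝ)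
    (hρ : ρ ∈ Set.Ico (0 : ℝ) 1) (hγ : γ ∈ Set.Ioc (0 : ℝ) 1)
    (hα : alphaGain k ρ γ ≤ 1) :
    ∀ μ₀ ∈ Set.Icc (0 : ℝ) 1, ∀ seq : ℕ → ℝ,
      seq 0 = μ₀ → (∀ t, seq (t + 1) = Tmap k ρ γ (seq t)) →
      Tendsto seq atTop (nhds 0) := by
  rintro μ₀ hμ₀ seq rfl hrec
  refine tendsto_zero_of_recurrence_lt_self (Tmap_continuous k ρ γ) (Tmap_zero k ρ γ)
    (fun u hu => Tmap_nonneg (Set.Ico_subset_Icc_self hρ) (Set.Ioc_subset_Icc_self hγ) hu)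
    (fun u hu => ?_) hμ₀ hrec
  calc Tmap k ρ γ u < alphaGain k ρ γ * u := Tmap_lt_alphaGain_mul hk hρ.2 hγ hu
    _ ≤ u := mul_le_of_le_one_left hu.1.le hα
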